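/- arXiv:2108.09086 — 2 statements merged into one kernel-verified Lean document; each statement's English description precedes it below -/
import Mathlib

section
/- For every n ≥ 1 and ϑ ∈ (0,1), one has 1 + v_hᵀ T_{n+1}^{−1} e₁ = h²((ϑ−1)h + 1)/(1+h) ≠ 0; consequently, by the Sherman–Morrison formula, A_h = S_{n+1} + h^{−2} e₁ v_hᵀ is invertible and A_h^{−1} = S_{n+1}^{−1} − R_{n+1}, where R_{n+1} = (h^{−2} S_{n+1}^{−1} e₁ v_hᵀ S_{n+1}^{−1}) / (1 + h^{−2} v_hᵀ S_{n+1}^{−1} e₁). -/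
open Matrix Real Filter

/-- tridiagonal Toeplitz matrix with diagonal `d` and off-diagonal `o` -/
def trid (N : ℕ) (d o : ℝ) : Matrix (Fin N) (Fin N) ℝ :=
  Matrix.of fun r c => if r = c then d else if r.1 + 1 = c.1 ∨ c.1 + 1 = r.1 then o else 0

/-- the matrix `T_{n+1}`: the Toeplitz matrix generated by `2 - 2cos θ`
(diagonal entries 2, off-diagonal entries -1) -/
def T (N : ℕ) : Matrix (Fin N) (Fin N) ℝ := trid N 2 (-1)

/-- the grid spacing `h = 1/(n+1)` -/
noncomputable def h (n : ℕ) : ℝ := 1 / (n + 1)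

/-- `S_{n+1} = h⁻² T_{n+1}` -/
noncomputable def S (n : ℕ) : Matrix (Fin (n+1)) (Fin (n+1)) ℝ := ((h n)^2)⁻¹ • T (n+1)

/-- the vector `v_h` with first component `ϑh²-2`, second `(1-ϑ)h²+1`, the rest `0` -/
noncomputable def vh (n : ℕ) (ϑ : ℝ) : Fin (n+1) → ℝ :=
  fun i => if i.1 = 0 then ϑ * (h n)^2 - 2 else if i.1 = 1 then (1-ϑ) * (h n)^2 + 1 else 0

/-- the first standard basis vector `e₁` -/
def e1 (n : ℕ) : Fin (n+1) → ℝ := fun i => if i.1 = 0 then 1 else 0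

/-- the Coco–Russo matrix `A_h = S_{n+1} + h⁻² e₁ v_hᵀ` -/
noncomputable def A (n : ℕ) (ϑ : ℝ) : Matrix (Fin (n+1)) (Fin (n+1)) ℝ :=
  S n + ((h n)^2)⁻¹ • Matrix.vecMulVec (e1 n) (vh n ϑ)

/-- `R_{n+1} = (h⁻² S⁻¹ e₁ v_hᵀ S⁻¹) / (1 + h⁻² v_hᵀ S⁻¹ e₁)` -/
noncomputable def R (n : ℕ) (ϑ : ℝ) : Matrix (Fin (n+1)) (Fin (n+1)) ℝ :=
  (1 + ((h n)^2)⁻¹ * (vh n ϑ ⬝ᵥ ((S n)⁻¹ *ᵥ e1 n)))⁻¹ •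
    (((h n)^2)⁻¹ • Matrix.vecMulVec ((S n)⁻¹ *ᵥ e1 n) (vh n ϑ ᵥ* (S n)⁻¹))

noncomputable def mval (N a b : ℕ) : ℝ :=
  if a ≤ b then ((a:ℝ)+1) * ((N:ℝ)-(b:ℝ)) / ((N:ℝ)+1)
  else ((b:ℝ)+1) * ((N:ℝ)-(a:ℝ)) / ((N:ℝ)+1)

lemma mval_le (N a b : ℕ) (hab : a ≤ b) :
    mval N a b = ((a:ℝ)+1) * ((N:ℝ)-(b:ℝ)) / ((N:ℝ)+1) := if_pos hab

lemma mval_ge (N a b : ℕ) (hab : b ≤ a) :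
    mval N a b = ((b:ℝ)+1) * ((N:ℝ)-(a:ℝ)) / ((N:ℝ)+1) := by
  unfold mval
  split_ifs with hh
  · have : a = b := le_antisymm hh hab
    subst this; rfl
  · rfl

noncomputable def Minv (N : ℕ) : Matrix (Fin N) (Fin N) ℝ :=
  Matrix.of fun i j => mval N i.1 j.1

lemma Minv_apply (N : ℕ) (i j : Fin N) : Minv N i j = mval N i.1 j.1 := rfl

lemma T_mul_Minv (N : ℕ) : T N * Minv N = 1 := by
  ext r c
  rw [Matrix.mul_apply]
  have hN0 : ((N:ℝ)+1) ≠ 0 := by positivity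
  have key : ∀ k : Fin N, T N r k * Minv N k c =
      (if k = r then 2 * Minv N r c else 0)
      + (if k.1 = r.1 + 1 then -(Minv N k c) else 0)
      + (if k.1 + 1 = r.1 then -(Minv N k c) else 0) := by
    intro k
    by_cases h1 : k = r
    · subst h1
      have hT2 : T N k k = 2 := if_pos rfl
      rw [hT2, if_pos rfl, if_neg (by omega), if_neg (by omega)]; ring
    · rw [if_neg h1]
      have hT2 : T N r k
          = if r = k then 2 else if r.1 + 1 = k.1 ∨ k.1 + 1 = r.1 then -1 else 0 := rfl
      rw [hT2, if_neg (Ne.symm h1)]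
      by_cases h2 : k.1 = r.1 + 1
      · rw [if_pos (Or.inl h2.symm), if_pos h2, if_neg (by omega)]; ring
      · by_cases h3 : k.1 + 1 = r.1
        · rw [if_pos (Or.inr h3), if_neg h2, if_pos h3]; ring
        · rw [if_neg (by rintro (hc | hc) <;> omega), if_neg h2, if_neg h3]; ring
  rw [Finset.sum_congr rfl (fun k _ => key k), Finset.sum_add_distrib, Finset.sum_add_distrib]
  have s1 : (∑ k : Fin N, if k = r then 2 * Minv N r c else 0) = 2 * Minv N r c := by simp
  have s2 : (∑ k : Fin N, if k.1 = r.1 + 1 then -(Minv N k c) else 0)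
      = if r.1 + 1 < N then -(mval N (r.1+1) c.1) else 0 := by
    by_cases h2 : r.1 + 1 < N
    · rw [if_pos h2, Fintype.sum_eq_single (⟨r.1+1, h2⟩ : Fin N)]
      · rw [if_pos rfl]; rfl
      · intro k hk
        exact if_neg (fun hh => hk (Fin.ext (show k.1 = r.1 + 1 from hh)))
    · rw [if_neg h2, Finset.sum_eq_zero]
      intro k _
      exact if_neg (by omega)
  have s3 : (∑ k : Fin N, if k.1 + 1 = r.1 then -(Minv N k c) else 0)
      = if 0 < r.1 then -(mval N (r.1-1) c.1) else 0 := by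
    by_cases h3 : 0 < r.1
    · rw [if_pos h3, Fintype.sum_eq_single (⟨r.1-1, by omega⟩ : Fin N)]
      · rw [if_pos (show r.1 - 1 + 1 = r.1 by omega)]; rfl
      · intro k hk
        exact if_neg (fun hh => hk (Fin.ext (show k.1 = r.1 - 1 by omega)))
    · rw [if_neg h3, Finset.sum_eq_zero]
      intro k _
      exact if_neg (by omega)
  rw [s1, s2, s3, Minv_apply]
  have hone : (1 : Matrix (Fin N) (Fin N) ℝ) r c = if r.1 = c.1 then 1 else 0 := by
    rw [Matrix.one_apply]; congr 1; simp [Fin.ext_iff]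
  rw [hone]
  have hrN : r.1 < N := r.2
  have hcN : c.1 < N := c.2
  rcases lt_trichotomy r.1 c.1 with hrc | hrc | hrc
  · -- r < c
    rw [if_pos (show r.1 + 1 < N by omega), if_neg (show ¬ r.1 = c.1 by omega),
      mval_le N _ _ (le_of_lt hrc), mval_le N _ _ (by omega)]
    by_cases h3 : 0 < r.1
    · rw [if_pos h3, mval_le N _ _ (show r.1 - 1 ≤ c.1 by omega),
        Nat.cast_sub (show 1 ≤ r.1 by omega)]
      push_cast
      field_simp
      ring
    · rw [if_neg h3]
      have hr0 : r.1 = 0 := by omega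
      rw [hr0]
      push_cast
      field_simp
      ring
  · -- r = c
    by_cases h2 : r.1 + 1 < N
    · by_cases h3 : 0 < r.1
      · rw [if_pos h2, if_pos h3, if_pos (show r.1 = c.1 from hrc), ← hrc,
          mval_le N _ _ le_rfl, mval_ge N _ _ (by omega),
          mval_le N _ _ (show r.1 - 1 ≤ r.1 by omega),
          Nat.cast_sub (show 1 ≤ r.1 by omega)]
        push_cast
        field_simp
        ring
      · rw [if_pos h2, if_neg h3, if_pos (show r.1 = c.1 from hrc), ← hrc,
          mval_le N _ _ le_rfl, mval_ge N _ _ (by omega)]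
        have hr0 : r.1 = 0 := by omega
        rw [hr0]
        push_cast
        field_simp
        ring
    · have hNrr : (N:ℝ) = (r.1:ℝ) + 1 := by
        have hh : N = r.1 + 1 := by omega
        exact_mod_cast hh
      by_cases h3 : 0 < r.1
      · rw [if_neg h2, if_pos h3, if_pos (show r.1 = c.1 from hrc), ← hrc,
          mval_le N _ _ le_rfl,
          mval_le N _ _ (show r.1 - 1 ≤ r.1 by omega),
          Nat.cast_sub (show 1 ≤ r.1 by omega), hNrr]
        push_cast
        field_simp
        ring
      · rw [if_neg h2, if_neg h3, if_pos (show r.1 = c.1 from hrc), ← hrc,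
          mval_le N _ _ le_rfl]
        have hr0 : r.1 = 0 := by omega
        rw [hr0, hNrr, hr0]
        norm_num
  · -- r > c
    by_cases h2 : r.1 + 1 < N
    · rw [if_pos h2, if_pos (show 0 < r.1 by omega), if_neg (show ¬ r.1 = c.1 by omega),
        mval_ge N _ _ (le_of_lt hrc), mval_ge N _ _ (by omega),
        mval_ge N _ _ (show c.1 ≤ r.1 - 1 by omega),
        Nat.cast_sub (show 1 ≤ r.1 by omega)]
      push_cast
      field_simp
      ring
    · have hNrr : (N:ℝ) = (r.1:ℝ) + 1 := by
        have hh : N = r.1 + 1 := by omega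
        exact_mod_cast hh
      rw [if_neg h2, if_pos (show 0 < r.1 by omega), if_neg (show ¬ r.1 = c.1 by omega),
        mval_ge N _ _ (le_of_lt hrc),
        mval_ge N _ _ (show c.1 ≤ r.1 - 1 by omega),
        Nat.cast_sub (show 1 ≤ r.1 by omega), hNrr]
      push_cast
      field_simp
      ring

lemma T_inv (N : ℕ) : (T N)⁻¹ = Minv N := Matrix.inv_eq_right_inv (T_mul_Minv N)

lemma Minv_mulVec_e1 (n : ℕ) :
    Minv (n+1) *ᵥ e1 n = fun i => ((n:ℝ) + 1 - (i.1:ℝ)) / ((n:ℝ) + 2) := by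
  funext i
  show (∑ j : Fin (n+1), Minv (n+1) i j * e1 n j) = _
  rw [Fintype.sum_eq_single (0 : Fin (n+1))]
  · have he : e1 n 0 = 1 := rfl
    rw [he, mul_one, Minv_apply, Fin.val_zero, mval_ge (n+1) i.1 0 (Nat.zero_le _)]
    push_cast
    ring
  · intro j hj
    have : e1 n j = 0 := by
      simp only [e1]
      rw [if_neg (show ¬ j.1 = 0 from fun hh => hj (Fin.ext hh))]
    rw [this, mul_zero]

lemma dot_eq (n : ℕ) (hn : 1 ≤ n) (ϑ : ℝ) :
    1 + vh n ϑ ⬝ᵥ ((T (n+1))⁻¹ *ᵥ e1 n)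
      = ((n:ℝ) + ϑ) / (((n:ℝ)+1)^2 * ((n:ℝ)+2)) := by
  obtain ⟨m, rfl⟩ : ∃ m, n = m + 1 := ⟨n-1, by omega⟩
  rw [T_inv, Minv_mulVec_e1]
  rw [dotProduct, Fin.sum_univ_succ, Fin.sum_univ_succ]
  have hz : ∀ i : Fin m, vh (m+1) ϑ i.succ.succ = 0 := by
    intro i
    have h2 : (i.succ.succ : Fin (m+2)).1 = i.1 + 2 := rfl
    simp only [vh, h2]
    rw [if_neg (by omega), if_neg (by omega)]
  rw [Finset.sum_eq_zero (fun i _ => by rw [hz i, zero_mul]), add_zero]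
  have v0 : vh (m+1) ϑ 0 = ϑ * (h (m+1))^2 - 2 := rfl
  have v1 : vh (m+1) ϑ (0 : Fin (m+1)).succ = (1-ϑ) * (h (m+1))^2 + 1 := rfl
  rw [v0, v1]
  have c0 : (((0 : Fin (m+2)).1:ℝ)) = 0 := by norm_num
  have c1 : ((((0 : Fin (m+1)).succ : Fin (m+2)).1:ℝ)) = 1 := by norm_num
  rw [c0, c1]
  unfold h
  have h1 : ((m:ℝ) + 1 + 1) > 0 := by positivity
  have h2 : ((m:ℝ) + 1 + 2) > 0 := by positivity
  push_cast
  field_simp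
  ring

lemma vecMulVec_mul' {N : ℕ} (u v : Fin N → ℝ) (M : Matrix (Fin N) (Fin N) ℝ) :
    vecMulVec u v * M = vecMulVec u (v ᵥ* M) := by
  ext i j
  simp only [Matrix.mul_apply, vecMulVec_apply, Matrix.vecMul, dotProduct,
    Finset.mul_sum, mul_assoc]

lemma mul_vecMulVec' {N : ℕ} (M : Matrix (Fin N) (Fin N) ℝ) (u v : Fin N → ℝ) :
    M * vecMulVec u v = vecMulVec (M *ᵥ u) v := by
  ext i j
  simp only [Matrix.mul_apply, vecMulVec_apply, Matrix.mulVec, dotProduct,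
    Finset.sum_mul, mul_assoc]

lemma vecMul_vecMulVec' {N : ℕ} (x u v : Fin N → ℝ) :
    x ᵥ* vecMulVec u v = (x ⬝ᵥ u) • v := by
  funext j
  simp only [Matrix.vecMul, dotProduct, vecMulVec_apply, Pi.smul_apply, smul_eq_mul,
    Finset.sum_mul, mul_assoc]

lemma vecMulVec_smul' {N : ℕ} (u : Fin N → ℝ) (t : ℝ) (v : Fin N → ℝ) :
    vecMulVec u (t • v) = t • vecMulVec u v := by
  ext i j
  simp only [vecMulVec_apply, Pi.smul_apply, smul_eq_mul, Matrix.smul_apply]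
  ring

/-- `1 + v_hᵀ T_{n+1}⁻¹ e₁ = h²((ϑ−1)h+1)/(1+h) ≠ 0`; hence (Sherman–Morrison)
`A_h` is invertible and `A_h⁻¹ = S_{n+1}⁻¹ − R_{n+1}`. -/
theorem stmt_6 (n : ℕ) (hn : 1 ≤ n) (ϑ : ℝ) (hϑ : ϑ ∈ Set.Ioo (0:ℝ) 1) :
    (1 + vh n ϑ ⬝ᵥ ((T (n+1))⁻¹ *ᵥ e1 n)
      = (h n)^2 * ((ϑ - 1) * h n + 1) / (1 + h n)) ∧
    (1 + vh n ϑ ⬝ᵥ ((T (n+1))⁻¹ *ᵥ e1 n) ≠ 0) ∧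
    IsUnit (A n ϑ).det ∧
    (A n ϑ)⁻¹ = (S n)⁻¹ - R n ϑ := by
  obtain ⟨hϑ0, hϑ1⟩ := hϑ
  have hn1 : (0:ℝ) < (n:ℝ) + 1 := by positivity
  have hn2 : (0:ℝ) < (n:ℝ) + 2 := by positivity
  have e_dot := dot_eq n hn ϑ
  have part1 : 1 + vh n ϑ ⬝ᵥ ((T (n+1))⁻¹ *ᵥ e1 n)
      = (h n)^2 * ((ϑ - 1) * h n + 1) / (1 + h n) := by
    rw [e_dot]
    unfold h
    field_simp
    ring
  have part2 : 1 + vh n ϑ ⬝ᵥ ((T (n+1))⁻¹ *ᵥ e1 n) ≠ 0 := by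
    rw [e_dot]
    exact div_ne_zero (by nlinarith [Nat.cast_nonneg (α := ℝ) n]) (by positivity)
  -- Sherman–Morrison
  have hh2 : (h n)^2 ≠ 0 := by unfold h; positivity
  have hST : S n * ((h n)^2 • Minv (n+1)) = 1 := by
    unfold S
    rw [Matrix.smul_mul, Matrix.mul_smul, smul_smul, inv_mul_cancel₀ hh2, one_smul, T_mul_Minv]
  have hSinv : (S n)⁻¹ = (h n)^2 • Minv (n+1) := Matrix.inv_eq_right_inv hST
  have hSS : S n * (S n)⁻¹ = 1 := by rw [hSinv]; exact hST
  set c : ℝ := ((h n)^2)⁻¹ with hc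
  set u := e1 n with hu
  set v := vh n ϑ with hv
  set w := (S n)⁻¹ *ᵥ u with hw
  set z := v ᵥ* (S n)⁻¹ with hz
  set t := v ⬝ᵥ w with ht
  set d : ℝ := 1 + c * t with hdd
  have hdD : d = 1 + vh n ϑ ⬝ᵥ ((T (n+1))⁻¹ *ᵥ e1 n) := by
    rw [hdd, ht, hw, hSinv, T_inv, Matrix.smul_mulVec, dotProduct_smul,
      smul_eq_mul, ← mul_assoc, inv_mul_cancel₀ hh2, one_mul]
  have hd0 : d ≠ 0 := by rw [hdD]; exact part2
  set V := vecMulVec u z with hV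
  have h1 : S n * R n ϑ = (d⁻¹ * c) • V := by
    show S n * (d⁻¹ • (c • vecMulVec w z)) = _
    rw [Matrix.mul_smul, Matrix.mul_smul, mul_vecMulVec', hw, Matrix.mulVec_mulVec, hSS,
      Matrix.one_mulVec, smul_smul]
  have h2 : (c • vecMulVec u v) * (S n)⁻¹ = c • V := by
    rw [Matrix.smul_mul, vecMulVec_mul', ← hz]
  have h3 : (c • vecMulVec u v) * R n ϑ = (c * (d⁻¹ * (c * t))) • V := by
    show (c • vecMulVec u v) * (d⁻¹ • (c • vecMulVec w z)) = _
    rw [Matrix.smul_mul, Matrix.mul_smul, Matrix.mul_smul, vecMulVec_mul',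
      vecMul_vecMulVec', ← ht, vecMulVec_smul', smul_smul, smul_smul, smul_smul, ← hV]
    congr 1
    ring
  have hAX : A n ϑ * ((S n)⁻¹ - R n ϑ) = 1 := by
    have hA : A n ϑ = S n + c • vecMulVec u v := rfl
    rw [hA, add_mul, mul_sub, mul_sub, hSS, h1, h2, h3]
    have hcoef : c - d⁻¹ * c - c * (d⁻¹ * (c * t)) = 0 := by
      field_simp
      ring
    have : (1 : Matrix (Fin (n+1)) (Fin (n+1)) ℝ) - (d⁻¹ * c) • V + (c • V - (c * (d⁻¹ * (c * t))) • V)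
        = 1 + (c - d⁻¹ * c - c * (d⁻¹ * (c * t))) • V := by
      module
    rw [this, hcoef, zero_smul, add_zero]
  exact ⟨part1, part2, Matrix.isUnit_det_of_right_inverse hAX, Matrix.inv_eq_right_inv hAX⟩
end

section
/- For every n ≥ 1 and ϑ ∈ (0,1), the induced ∞-norm of A_h^{−1} is attained on its first row and equals ‖A_h^{−1}‖_∞ = (2 − h(ϑ−1)(1−h)) / (2(h(ϑ−1)+1)). -/
open Matrix Real Filter

/-- matrix norm induced by the vector ∞-norm: maximum absolute row sum -/
noncomputable def normInf {N : ℕ} (M : Matrix (Fin (N+1)) (Fin (N+1)) ℝ) : ℝ :=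
  Finset.univ.sup' Finset.univ_nonempty (fun r => ∑ c, |M r c|)

/-- matrix norm induced by the vector 1-norm: maximum absolute column sum -/
noncomputable def norm1 {N : ℕ} (M : Matrix (Fin (N+1)) (Fin (N+1)) ℝ) : ℝ :=
  Finset.univ.sup' Finset.univ_nonempty (fun c => ∑ r, |M r c|)

-- auxiliary defs
noncomputable def afun (n : ℕ) (ϑ : ℝ) (i j : ℕ) : ℝ :=
  if i = 0 then (if j = 0 then ϑ else if j = 1 then 1-ϑ else 0)
  else ((h n)^2)⁻¹ * (if i = j then 2 else if i = j + 1 ∨ j = i + 1 then -1 else 0)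

noncomputable def gfun (n : ℕ) (ϑ : ℝ) (i j : ℕ) : ℝ :=
  if j = 0 then ((n:ℝ)+1-i)/((n:ℝ)+ϑ)
  else if i ≤ j then ((i:ℝ)+ϑ-1)*((n:ℝ)+1-j)*(h n)^2/((n:ℝ)+ϑ)
  else ((j:ℝ)+ϑ-1)*((n:ℝ)+1-i)*(h n)^2/((n:ℝ)+ϑ)

noncomputable def Ginv (n : ℕ) (ϑ : ℝ) : Matrix (Fin (n+1)) (Fin (n+1)) ℝ :=
  Matrix.of fun i j => gfun n ϑ i.1 j.1

noncomputable def xfun (n : ℕ) (ϑ : ℝ) (i : ℕ) : ℝ :=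
  (1/2 + (((n:ℝ)+1) * (1 + (1-ϑ)*(h n)^2))/(2*((n:ℝ)+ϑ)))
  - ((1 + (1-ϑ)*(h n)^2)/(2*((n:ℝ)+ϑ))) * i - (h n)^2 * i^2 / 2

lemma hpos (n : ℕ) : 0 < h n := by unfold h; positivity

lemma hn1 (n : ℕ) : (h n) * ((n:ℝ)+1) = 1 := by
  unfold h; field_simp

lemma A_apply (n : ℕ) (ϑ : ℝ) (i j : Fin (n+1)) : A n ϑ i j = afun n ϑ i.1 j.1 := by
  have hh : h n ≠ 0 := (hpos n).ne'
  simp only [A, S, T, trid, afun, vh, e1, Matrix.add_apply, Matrix.smul_apply,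
    Matrix.vecMulVec_apply, Matrix.of_apply, smul_eq_mul, Fin.ext_iff]
  have hh2 : h n ^ 2 * (h n)⁻¹ ^ 2 = 1 := by
    rw [← mul_pow, mul_inv_cancel₀ hh, one_pow]
  split_ifs <;> first | omega | ring1 | (field_simp <;> ring1)

lemma sum_row (n : ℕ) (ϑ : ℝ) (hn : 1 ≤ n) (i : Fin (n+1)) (f : ℕ → ℝ)
    (hf : f (n+1) = 0) :
    ∑ j : Fin (n+1), A n ϑ i j * f j.1 =
      if i.1 = 0 then ϑ * f 0 + (1-ϑ) * f 1
      else ((h n)^2)⁻¹ * (-(f (i.1-1)) + 2 * f i.1 - f (i.1+1)) := by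
  have step : ∑ j : Fin (n+1), A n ϑ i j * f j.1
      = ∑ j ∈ Finset.range (n+1), afun n ϑ i.1 j * f j := by
    rw [← Fin.sum_univ_eq_sum_range (fun m => afun n ϑ i.1 m * f m) (n+1)]
    exact Finset.sum_congr rfl fun j _ => by rw [A_apply]
  rw [step]
  by_cases hi : i.1 = 0
  · rw [if_pos hi]
    have key : ∀ m ∈ Finset.range (n+1), afun n ϑ i.1 m * f m
        = (if m = 0 then ϑ * f 0 else 0) + (if m = 1 then (1-ϑ) * f 1 else 0) := by
      intro m _
      simp only [afun, if_pos hi, hi]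
      rcases (by omega : m = 0 ∨ m = 1 ∨ (m ≠ 0 ∧ m ≠ 1)) with hm | hm | ⟨hm0, hm1⟩ <;>
        first | (subst hm; simp) | simp [hm0, hm1] <;> ring1
    rw [Finset.sum_congr rfl key, Finset.sum_add_distrib,
      Finset.sum_ite_eq' (Finset.range (n+1)) 0 (fun _ => ϑ * f 0),
      Finset.sum_ite_eq' (Finset.range (n+1)) 1 (fun _ => (1-ϑ) * f 1),
      if_pos (by simp), if_pos (by simp only [Finset.mem_range]; omega)]
  · rw [if_neg hi]
    have h1i : 1 ≤ i.1 := Nat.one_le_iff_ne_zero.2 hi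
    have key : ∀ m ∈ Finset.range (n+1), afun n ϑ i.1 m * f m
        = (if m = i.1 - 1 then -((h n)^2)⁻¹ * f (i.1-1) else 0)
          + (if m = i.1 then 2*((h n)^2)⁻¹ * f i.1 else 0)
          + (if m = i.1 + 1 then -((h n)^2)⁻¹ * f (i.1+1) else 0) := by
      intro m _
      simp only [afun, if_neg hi]
      rcases (by omega : m = i.1 - 1 ∨ m = i.1 ∨ m = i.1 + 1
          ∨ (¬(i.1 = m) ∧ ¬(i.1 = m + 1 ∨ m = i.1 + 1) ∧ m ≠ i.1 - 1)) with
        hm | hm | hm | ⟨hm1, hm2, hm3⟩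
      · subst hm
        rw [if_neg (by omega), if_pos (by omega), if_pos rfl, if_neg (by omega),
          if_neg (by omega)]
        ring
      · subst hm
        rw [if_pos rfl, if_neg (by omega), if_pos rfl, if_neg (by omega)]
        ring
      · subst hm
        rw [if_neg (by omega), if_pos (by omega), if_neg (by omega), if_neg (by omega),
          if_pos rfl]
        ring
      · rw [if_neg hm1, if_neg hm2, if_neg hm3, if_neg (by omega), if_neg (by omega)]
        ring
    rw [Finset.sum_congr rfl key, Finset.sum_add_distrib, Finset.sum_add_distrib,
      Finset.sum_ite_eq' (Finset.range (n+1)) (i.1-1) (fun _ => -((h n)^2)⁻¹ * f (i.1-1)),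
      Finset.sum_ite_eq' (Finset.range (n+1)) i.1 (fun _ => 2*((h n)^2)⁻¹ * f i.1),
      Finset.sum_ite_eq' (Finset.range (n+1)) (i.1+1) (fun _ => -((h n)^2)⁻¹ * f (i.1+1)),
      if_pos (by have := i.2; simp only [Finset.mem_range]; omega),
      if_pos (by have := i.2; simp only [Finset.mem_range]; omega)]
    by_cases hlast : i.1 + 1 ∈ Finset.range (n+1)
    · rw [if_pos hlast]; ring
    · rw [if_neg hlast]
      have hieq : i.1 + 1 = n + 1 := by
        have := i.2; simp only [Finset.mem_range] at hlast; omega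
      rw [hieq, hf]; ring

lemma gfun_zero (n : ℕ) (ϑ : ℝ) (m : ℕ) : gfun n ϑ m 0 = ((n:ℝ)+1-m)/((n:ℝ)+ϑ) := by
  simp [gfun]

lemma gfun_le (n : ℕ) (ϑ : ℝ) {m k : ℕ} (hk : 1 ≤ k) (hmk : m ≤ k) :
    gfun n ϑ m k = ((m:ℝ)+ϑ-1)*((n:ℝ)+1-k)*(h n)^2/((n:ℝ)+ϑ) := by
  unfold gfun
  rw [if_neg (by omega), if_pos hmk]

lemma gfun_ge (n : ℕ) (ϑ : ℝ) {m k : ℕ} (hk : 1 ≤ k) (hkm : k ≤ m) :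
    gfun n ϑ m k = ((k:ℝ)+ϑ-1)*((n:ℝ)+1-m)*(h n)^2/((n:ℝ)+ϑ) := by
  unfold gfun
  rw [if_neg (by omega)]
  by_cases hmk : m ≤ k
  · have : m = k := le_antisymm hmk hkm
    subst this; rw [if_pos le_rfl]
  · rw [if_neg hmk]

lemma AG (n : ℕ) (ϑ : ℝ) (hn : 1 ≤ n) (hϑ0 : 0 < ϑ) (hϑ1 : ϑ < 1) :
    A n ϑ * Ginv n ϑ = 1 := by
  have hD : (0:ℝ) < (n:ℝ) + ϑ := by positivity
  have hh : h n ≠ 0 := (hpos n).ne'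
  ext i k
  rw [Matrix.mul_apply, Matrix.one_apply]
  have hk : k.1 ≤ n := by omega
  have hfrom : ∀ j : Fin (n+1), A n ϑ i j * Ginv n ϑ j k
      = A n ϑ i j * (fun m => gfun n ϑ m k.1) j.1 := fun j => rfl
  rw [Finset.sum_congr rfl fun j _ => hfrom j]
  rw [sum_row n ϑ hn i (fun m => gfun n ϑ m k.1)
    (by
      show gfun n ϑ (n+1) k.1 = 0
      unfold gfun
      by_cases hk0 : k.1 = 0
      · rw [if_pos hk0]; push_cast; ring
      · rw [if_neg hk0, if_neg (by omega)]; push_cast; ring)]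
  have hFe : (i = k) ↔ i.1 = k.1 := Fin.ext_iff
  by_cases hi : i.1 = 0
  · rw [if_pos hi]
    by_cases hk0 : k.1 = 0
    · rw [if_pos (by rw [hFe]; omega)]
      simp only [hk0, gfun_zero]
      push_cast
      field_simp
      ring
    · rw [if_neg (by rw [hFe]; omega)]
      have h1k : 1 ≤ k.1 := by omega
      rw [gfun_le n ϑ h1k (by omega), gfun_le n ϑ h1k (by omega)]
      push_cast
      ring
  · rw [if_neg hi]
    have h1i : 1 ≤ i.1 := by omega
    have hc1 : ((i.1 - 1 : ℕ) : ℝ) = (i.1 : ℝ) - 1 := by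
      push_cast [Nat.cast_sub h1i]; ring
    by_cases hk0 : k.1 = 0
    · rw [if_neg (by rw [hFe]; omega)]
      simp only [hk0, gfun_zero]
      rw [hc1]; try push_cast
      ring
    · have h1k : 1 ≤ k.1 := by omega
      rcases lt_trichotomy i.1 k.1 with hik | hik | hik
      · rw [if_neg (by rw [hFe]; omega)]
        rw [gfun_le n ϑ h1k (by omega), gfun_le n ϑ h1k (by omega),
          gfun_le n ϑ h1k (by omega), hc1]
        push_cast; ring
      · rw [if_pos (by rw [hFe]; omega)]
        rw [gfun_le n ϑ h1k (by omega), gfun_le n ϑ h1k (by omega),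
          gfun_ge n ϑ h1k (by omega), hc1, hik]
        field_simp
        push_cast; ring
      · rw [if_neg (by rw [hFe]; omega)]
        rw [gfun_ge n ϑ h1k (by omega), gfun_ge n ϑ h1k (by omega),
          gfun_ge n ϑ h1k (by omega), hc1]
        push_cast; ring

lemma Ax (n : ℕ) (ϑ : ℝ) (hn : 1 ≤ n) (hϑ0 : 0 < ϑ) :
    (A n ϑ).mulVec (fun i => xfun n ϑ i.1) = fun _ => 1 := by
  have hD : (0:ℝ) < (n:ℝ) + ϑ := by positivity
  have hh : h n ≠ 0 := (hpos n).ne'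
  have h2 : (h n)^2 * ((n:ℝ)+1)^2 = 1 := by
    rw [← mul_pow, hn1, one_pow]
  funext i
  rw [Matrix.mulVec, dotProduct]
  rw [sum_row n ϑ hn i (xfun n ϑ)
    (by unfold xfun; push_cast; linear_combination (-(1:ℝ)/2) * h2: xfun n ϑ (n+1) = 0)]
  by_cases hi : i.1 = 0
  · rw [if_pos hi]
    unfold xfun
    push_cast
    field_simp
    ring
  · rw [if_neg hi]
    have h1i : 1 ≤ i.1 := by omega
    have hc1 : ((i.1 - 1 : ℕ) : ℝ) = (i.1 : ℝ) - 1 := by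
      push_cast [Nat.cast_sub h1i]; ring
    unfold xfun
    rw [hc1]
    push_cast
    field_simp
    ring

lemma Gsum (n : ℕ) (ϑ : ℝ) (hn : 1 ≤ n) (hϑ0 : 0 < ϑ) (hϑ1 : ϑ < 1) (i : Fin (n+1)) :
    ∑ k : Fin (n+1), gfun n ϑ i.1 k.1 = xfun n ϑ i.1 := by
  have hAG := AG n ϑ hn hϑ0 hϑ1
  have hGA : Ginv n ϑ * A n ϑ = 1 := mul_eq_one_comm.mp hAG
  have hx : (Ginv n ϑ).mulVec ((A n ϑ).mulVec (fun i => xfun n ϑ i.1))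
      = fun i => xfun n ϑ i.1 := by
    rw [Matrix.mulVec_mulVec, hGA, Matrix.one_mulVec]
  rw [Ax n ϑ hn hϑ0] at hx
  have := congrFun hx i
  rw [Matrix.mulVec, dotProduct] at this
  simp only [mul_one] at this
  exact this

lemma gfun_nonneg (n : ℕ) (ϑ : ℝ) (hϑ0 : 0 < ϑ) (hϑ1 : ϑ < 1) {i k : ℕ}
    (hi : 1 ≤ i) (hi' : i ≤ n) (hk : k ≤ n) : 0 ≤ gfun n ϑ i k := by
  have hD : (0:ℝ) < (n:ℝ) + ϑ := by positivity
  have hi1 : (1:ℝ) ≤ (i:ℝ) := by exact_mod_cast hi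
  have hin : (i:ℝ) ≤ (n:ℝ) := by exact_mod_cast hi'
  have hkn : (k:ℝ) ≤ (n:ℝ) := by exact_mod_cast hk
  by_cases hk0 : k = 0
  · subst hk0; rw [gfun_zero]
    apply div_nonneg _ hD.le
    linarith
  · have h1k : 1 ≤ k := by omega
    have hk1 : (1:ℝ) ≤ (k:ℝ) := by exact_mod_cast h1k
    by_cases hik : i ≤ k
    · rw [gfun_le n ϑ h1k hik]
      apply div_nonneg _ hD.le
      apply mul_nonneg (mul_nonneg (by linarith) (by linarith)) (sq_nonneg _)
    · rw [gfun_ge n ϑ h1k (by omega)]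
      apply div_nonneg _ hD.le
      apply mul_nonneg (mul_nonneg (by linarith) (by linarith)) (sq_nonneg _)

lemma gfun_row0_nonpos (n : ℕ) (ϑ : ℝ) (hϑ0 : 0 < ϑ) (hϑ1 : ϑ < 1) {k : ℕ}
    (h1k : 1 ≤ k) (hk : k ≤ n) : gfun n ϑ 0 k ≤ 0 := by
  have hD : (0:ℝ) < (n:ℝ) + ϑ := by positivity
  have hkn : (k:ℝ) ≤ (n:ℝ) := by exact_mod_cast hk
  rw [gfun_le n ϑ h1k (by omega)]
  apply div_nonpos_of_nonpos_of_nonneg _ hD.le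
  push_cast
  apply mul_nonpos_of_nonpos_of_nonneg _ (sq_nonneg _)
  apply mul_nonpos_of_nonpos_of_nonneg (by linarith) (by linarith)

theorem stmt_12' (n : ℕ) (hn : 1 ≤ n) (ϑ : ℝ) (hϑ : ϑ ∈ Set.Ioo (0:ℝ) 1) :
    normInf (A n ϑ)⁻¹ = ∑ c : Fin (n+1), |(A n ϑ)⁻¹ 0 c| ∧
    normInf (A n ϑ)⁻¹ = (2 - h n * (ϑ - 1) * (1 - h n)) / (2 * (h n * (ϑ - 1) + 1)) := by
  obtain ⟨hϑ0, hϑ1⟩ := hϑ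
  have hD : (0:ℝ) < (n:ℝ) + ϑ := by positivity
  have hh : (0:ℝ) < h n := hpos n
  have hAinv : (A n ϑ)⁻¹ = Ginv n ϑ := Matrix.inv_eq_right_inv (AG n ϑ hn hϑ0 hϑ1)
  rw [hAinv]
  set r0 : ℝ := 2*((n:ℝ)+1)/((n:ℝ)+ϑ) - xfun n ϑ 0 with hr0
  -- row 0 sum
  have row0 : ∑ c : Fin (n+1), |Ginv n ϑ 0 c| = r0 := by
    have hterm : ∀ c : Fin (n+1), |Ginv n ϑ 0 c|
        = (if c = (0 : Fin (n+1)) then 2*((n:ℝ)+1)/((n:ℝ)+ϑ) else 0) - gfun n ϑ 0 c.1 := by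
      intro c
      by_cases hc : c = 0
      · subst hc
        rw [if_pos rfl]
        show |gfun n ϑ 0 (0:Fin (n+1)).1| = _
        simp only [Fin.val_zero]
        rw [gfun_zero]
        rw [abs_of_nonneg (by apply div_nonneg _ hD.le; push_cast; linarith)]
        push_cast; ring
      · rw [if_neg hc]
        have h1c : 1 ≤ c.1 := by
          rcases Nat.eq_zero_or_pos c.1 with h0 | h0
          · exact absurd (Fin.ext h0) hc
          · omega
        have hcn : c.1 ≤ n := by omega
        show |gfun n ϑ 0 c.1| = _
        rw [abs_of_nonpos (gfun_row0_nonpos n ϑ hϑ0 hϑ1 h1c hcn)]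
        ring
    rw [Finset.sum_congr rfl fun c _ => hterm c, Finset.sum_sub_distrib,
      Finset.sum_ite_eq' Finset.univ (0 : Fin (n+1)) (fun _ => 2*((n:ℝ)+1)/((n:ℝ)+ϑ)),
      if_pos (Finset.mem_univ _)]
    have := Gsum n ϑ hn hϑ0 hϑ1 0
    simp only [Fin.val_zero] at this
    rw [this]
  -- other rows
  have rowi : ∀ i : Fin (n+1), i.1 ≠ 0 → ∑ c : Fin (n+1), |Ginv n ϑ i c| = xfun n ϑ i.1 := by
    intro i hi
    rw [← Gsum n ϑ hn hϑ0 hϑ1 i]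
    refine Finset.sum_congr rfl fun c _ => ?_
    exact abs_of_nonneg (gfun_nonneg n ϑ hϑ0 hϑ1 (by omega) (by omega) (by omega))
  -- monotonicity: xfun i ≤ r0
  have h2 : (h n)^2 * ((n:ℝ)+1)^2 = 1 := by rw [← mul_pow, hn1, one_pow]
  have hhle1 : h n ≤ 1 := by
    unfold h
    rw [div_le_one (by positivity)]
    push_cast; linarith [Nat.cast_nonneg (α := ℝ) n]
  have hbase : 2*((n:ℝ)+1)/((n:ℝ)+ϑ) - 2*(xfun n ϑ 0) = (1-ϑ)*(1-h n)/((n:ℝ)+ϑ) := by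
    unfold xfun h
    push_cast
    field_simp
    ring
  have hmono : ∀ i : Fin (n+1), xfun n ϑ i.1 ≤ r0 := by
    intro i
    have ht0 : (0:ℝ) ≤ (i.1:ℝ) := by positivity
    have hE : (0:ℝ) ≤ (1 + (1-ϑ)*(h n)^2)/(2*((n:ℝ)+ϑ)) := by
      apply div_nonneg _ (by linarith)
      nlinarith [sq_nonneg (h n)]
    have hdecr : xfun n ϑ i.1 ≤ xfun n ϑ 0 := by
      unfold xfun
      push_cast
      nlinarith [mul_nonneg hE ht0, sq_nonneg ((i.1:ℝ)), sq_nonneg (h n * (i.1:ℝ))]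
    have hx0 : xfun n ϑ 0 ≤ r0 := by
      rw [hr0]
      have : (0:ℝ) ≤ (1-ϑ)*(1-h n)/((n:ℝ)+ϑ) := by
        apply div_nonneg _ hD.le
        apply mul_nonneg (by linarith) (by linarith)
      linarith [hbase]
    linarith
  -- normInf equals r0
  have hNI : normInf (Ginv n ϑ) = r0 := by
    unfold normInf
    apply le_antisymm
    · apply Finset.sup'_le
      intro r _
      by_cases hr : r.1 = 0
      · have : r = 0 := Fin.ext hr
        rw [this, row0]
      · rw [rowi r hr]
        exact hmono r
    · rw [← row0]
      exact Finset.le_sup' (fun r => ∑ c, |Ginv n ϑ r c|) (Finset.mem_univ 0)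
  have htarget : r0 = (2 - h n * (ϑ - 1) * (1 - h n)) / (2 * (h n * (ϑ - 1) + 1)) := by
    have hden : h n * (ϑ - 1) + 1 = h n * ((n:ℝ)+ϑ) := by
      unfold h; field_simp; ring
    rw [hden, hr0]
    have hne : h n * ((n:ℝ)+ϑ) ≠ 0 := by positivity
    unfold xfun h
    unfold h at hne
    push_cast
    field_simp
    ring
  exact ⟨hNI.trans row0.symm, hNI.trans htarget⟩


/-- `‖A_h⁻¹‖_∞` is attained on the first row and equals
`(2 − h(ϑ−1)(1−h))/(2(h(ϑ−1)+1))`. -/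
theorem stmt_12 (n : ℕ) (hn : 1 ≤ n) (ϑ : ℝ) (hϑ : ϑ ∈ Set.Ioo (0:ℝ) 1) :
    normInf (A n ϑ)⁻¹ = ∑ c : Fin (n+1), |(A n ϑ)⁻¹ 0 c| ∧
    normInf (A n ϑ)⁻¹ = (2 - h n * (ϑ - 1) * (1 - h n)) / (2 * (h n * (ϑ - 1) + 1)) := by
  exact stmt_12' n hn ϑ hϑ
end
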